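/- Assume the Riemann Hypothesis. If real numbers a and b satisfy ∑_{n=1}^∞ ((-1)^n/n^a)·cos(b·ln n) = 0 and ∑_{n=1}^∞ ((-1)^n/n^a)·sin(b·ln n) = 0 (both series convergent), then a = 1/2 or a = 1. -/

import Mathlib

/-!
Put `s = a - b i`. The two series are the real and imaginary parts of
`∑_{k ≥ 1} (-1)^k k^{-s} = -η(s)`, so their convergence forces the terms to tend to `0`, whence
`a > 0`. On `re s > 0` the series grouped in consecutive pairs converges locally uniformly, so its
sum is holomorphic there; by the identity theorem it is the entire L-function of `k ↦ (-1)^k`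
on `ZMod 2`, which equals `(2^{1-s} - 1) ζ(s)` because `(-1)^k = 1 - 2 χ₀(k)` for the trivial
Dirichlet character `χ₀` mod `2`. So `s = 1`, or `2^{1-s} = 1` and `a = 1`, or `s` is a zero of
`ζ` with positive real part, and the Riemann hypothesis gives `a = 1/2`.
-/

open Filter Topology Complex

namespace AlternatingZeta

lemma summable_nat_add_one_rpow {p : ℝ} (hp : p < -1) :
    Summable fun n : ℕ => ((n : ℝ) + 1) ^ p := by
  simpa using (summable_nat_add_iff 1).mpr (Real.summable_nat_rpow.mpr hp)

lemma sum_range_two_mul {M : Type*} [AddCommMonoid M] (f : ℕ → M) (N : ℕ) :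
    ∑ n ∈ Finset.range (2 * N), f n = ∑ m ∈ Finset.range N, (f (2 * m) + f (2 * m + 1)) := by
  induction N with
  | zero => simp
  | succ N ih =>
    rw [Finset.sum_range_succ, ← ih, show 2 * (N + 1) = 2 * N + 1 + 1 by ring,
      Finset.sum_range_succ, Finset.sum_range_succ, add_assoc]

lemma norm_ofReal_cpow_neg_sub_le {s : ℂ} (hs : -1 ≤ s.re) {x y : ℝ} (hx : 0 < x) (hxy : x ≤ y) :
    ‖(y : ℂ) ^ (-s) - (x : ℂ) ^ (-s)‖ ≤ ‖s‖ * x ^ (-s.re - 1) * (y - x) := by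
  have hderiv : ∀ t ∈ Set.Icc x y,
      HasDerivWithinAt (fun t : ℝ => (t : ℂ) ^ (-s)) (-s * (t : ℂ) ^ (-s - 1)) (Set.Icc x y) t := by
    intro t ht
    have ht0 : (t : ℂ) ∈ slitPlane := ofReal_mem_slitPlane.mpr (hx.trans_le ht.1)
    simpa using (((hasDerivAt_id (t : ℂ)).cpow_const (c := -s) ht0).comp_ofReal).hasDerivWithinAt
  have hbound : ∀ t ∈ Set.Icc x y, ‖-s * (t : ℂ) ^ (-s - 1)‖ ≤ ‖s‖ * x ^ (-s.re - 1) := by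
    intro t ht
    rw [norm_mul, norm_neg, norm_cpow_eq_rpow_re_of_pos (hx.trans_le ht.1)]
    gcongr
    simpa using Real.rpow_le_rpow_of_nonpos hx ht.1 (by linarith : -s.re - 1 ≤ 0)
  simpa [Real.norm_of_nonneg (sub_nonneg.mpr hxy)] using
    (convex_Icc x y).norm_image_sub_le_of_norm_hasDerivWithin_le hderiv hbound
      (Set.left_mem_Icc.mpr hxy) (Set.right_mem_Icc.mpr hxy)

lemma eqOn_of_forall_one_lt_re {U : Set ℂ} {f g : ℂ → ℂ} (hU : IsOpen U) (hUc : IsPreconnected U)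
    (hsub : {s : ℂ | 1 < s.re} ⊆ U) (hf : DifferentiableOn ℂ f U) (hg : DifferentiableOn ℂ g U)
    (hfg : ∀ s : ℂ, 1 < s.re → f s = g s) : Set.EqOn f g U := by
  have hopen : IsOpen {s : ℂ | 1 < s.re} := isOpen_lt continuous_const continuous_re
  have h2 : (2 : ℂ) ∈ {s : ℂ | 1 < s.re} := by norm_num
  refine (hf.analyticOnNhd hU).eqOn_of_preconnected_of_eventuallyEq (hg.analyticOnNhd hU) hUc
    (hsub h2) ?_
  filter_upwards [hopen.mem_nhds h2] with s hs using hfg s hs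

noncomputable def altSign : ZMod 2 → ℂ := fun j => (-1) ^ j.val

lemma altSign_natCast (n : ℕ) : altSign n = (-1) ^ n := by
  rw [altSign, ZMod.val_natCast, ← neg_one_pow_eq_pow_mod_two]

lemma sum_altSign : ∑ j, altSign j = 0 :=
  (Fin.sum_univ_two _).trans (by simp [altSign, ZMod.val])

lemma altSign_eq_one_sub_two_mul (j : ZMod 2) :
    altSign j = 1 - 2 * (1 : DirichletCharacter ℂ 2) j := by
  fin_cases j
  · change altSign 0 = 1 - 2 * (1 : DirichletCharacter ℂ 2) 0
    simp [altSign, MulChar.map_zero]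
  · change altSign 1 = 1 - 2 * (1 : DirichletCharacter ℂ 2) 1
    norm_num [altSign, ZMod.val_one]

lemma LFunction_altSign_of_one_lt_re {s : ℂ} (hs : 1 < s.re) :
    ZMod.LFunction altSign s = (2 ^ (1 - s) - 1) * riemannZeta s := by
  have hsign : (fun n : ℕ => altSign n) =
      1 - (2 : ℂ) • fun n : ℕ => (1 : DirichletCharacter ℂ 2) n := by
    ext n; simp [altSign_eq_one_sub_two_mul]
  have hχ₀ : LSeries (fun n : ℕ => (1 : DirichletCharacter ℂ 2) n) s =
      (1 - 2 ^ (-s)) * riemannZeta s := by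
    rw [← DirichletCharacter.LFunction_eq_LSeries _ hs]
    simpa [Nat.prime_two.primeFactors] using
      DirichletCharacter.LFunctionTrivChar_eq_mul_riemannZeta (N := 2)
        (by rintro rfl; norm_num at hs)
  rw [ZMod.LFunction_eq_LSeries _ hs, hsign, LSeries_sub (LSeriesSummable_one_iff.mpr hs)
    ((DirichletCharacter.LSeriesSummable_of_one_lt_re _ hs).smul 2), LSeries_smul, hχ₀,
    LSeries_one_eq_riemannZeta hs, sub_eq_add_neg 1 s, cpow_add _ _ two_ne_zero, cpow_one]
  ring

lemma LFunction_altSign {s : ℂ} (hs : s ≠ 1) :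
    ZMod.LFunction altSign s = (2 ^ (1 - s) - 1) * riemannZeta s := by
  refine eqOn_of_forall_one_lt_re isOpen_compl_singleton
    (isConnected_compl_singleton_of_one_lt_rank (by simp) _).isPreconnected ?_
    (ZMod.differentiable_LFunction_of_sum_zero sum_altSign).differentiableOn ?_
    (fun s hs => LFunction_altSign_of_one_lt_re hs) hs
  · rintro s hs rfl; norm_num at hs
  · have h2 : Differentiable ℂ fun s : ℂ => (2 : ℂ) ^ (1 - s) - 1 := by fun_prop
    exact h2.differentiableOn.mul differentiableOn_riemannZeta

/-- `altTerm s n = (-1)^k k^{-s}` with `k = n + 1`, so that `∑ n, altTerm s n = -η(s)`. -/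
noncomputable def altTerm (s : ℂ) (n : ℕ) : ℂ := (-1) ^ (n + 1) * ((n : ℂ) + 1) ^ (-s)

lemma natCast_add_one_eq_ofReal (n : ℕ) : (n : ℂ) + 1 = (((n : ℝ) + 1 : ℝ) : ℂ) := by
  push_cast; rfl

lemma norm_altTerm (s : ℂ) (n : ℕ) : ‖altTerm s n‖ = ((n : ℝ) + 1) ^ (-s.re) := by
  rw [altTerm, norm_mul, natCast_add_one_eq_ofReal, norm_cpow_eq_rpow_re_of_pos (by positivity)]
  simp

lemma altTerm_ofReal_sub_mul_I (a b : ℝ) (n : ℕ) :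
    altTerm (a - b * I) n =
      ↑((-1 : ℝ) ^ (n + 1) / ((n : ℝ) + 1) ^ a * Real.cos (b * Real.log ((n : ℝ) + 1))) +
      ↑((-1 : ℝ) ^ (n + 1) / ((n : ℝ) + 1) ^ a * Real.sin (b * Real.log ((n : ℝ) + 1))) * I := by
  have hr : (0 : ℝ) < (n : ℝ) + 1 := by positivity
  have hpow : (((n : ℝ) + 1 : ℝ) : ℂ) ^ (-((a : ℂ) - b * I)) =
      ↑(((n : ℝ) + 1) ^ a)⁻¹ * exp (↑(b * Real.log ((n : ℝ) + 1)) * I) := by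
    rw [cpow_def_of_ne_zero (ofReal_ne_zero.mpr hr.ne'), ← ofReal_log hr.le,
      Real.rpow_def_of_pos hr, ← Real.exp_neg, ofReal_exp, ← exp_add]
    push_cast; ring_nf
  rw [altTerm, natCast_add_one_eq_ofReal, hpow, exp_mul_I, ← ofReal_cos, ← ofReal_sin]
  push_cast; ring

lemma altTerm_two_mul_add_altTerm (s : ℂ) (m : ℕ) :
    altTerm s (2 * m) + altTerm s (2 * m + 1) =
      ((2 * m + 2 : ℝ) : ℂ) ^ (-s) - ((2 * m + 1 : ℝ) : ℂ) ^ (-s) := by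
  simp only [altTerm, pow_succ, pow_mul]
  push_cast; ring_nf

lemma norm_altTerm_two_mul_add_altTerm_le {s : ℂ} (hs : -1 ≤ s.re) (m : ℕ) :
    ‖altTerm s (2 * m) + altTerm s (2 * m + 1)‖ ≤ ‖s‖ * ((m : ℝ) + 1) ^ (-s.re - 1) := by
  have hm : (0 : ℝ) < 2 * m + 1 := by positivity
  calc ‖altTerm s (2 * m) + altTerm s (2 * m + 1)‖
      ≤ ‖s‖ * (2 * (m : ℝ) + 1) ^ (-s.re - 1) * ((2 * m + 2) - (2 * m + 1)) := by
        rw [altTerm_two_mul_add_altTerm]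
        exact norm_ofReal_cpow_neg_sub_le hs hm (by linarith)
    _ ≤ ‖s‖ * ((m : ℝ) + 1) ^ (-s.re - 1) := by
        rw [show (2 * m + 2 : ℝ) - (2 * m + 1) = 1 by ring, mul_one]
        gcongr ‖s‖ * ?_
        exact Real.rpow_le_rpow_of_nonpos (by positivity) (by linarith) (by linarith)

/-- `-η(s)` summed in consecutive pairs, which makes the series absolutely convergent on
`0 < re s`. -/
noncomputable def altZeta (s : ℂ) : ℂ := ∑' m : ℕ, (altTerm s (2 * m) + altTerm s (2 * m + 1))

lemma summable_altTerm {s : ℂ} (hs : 1 < s.re) : Summable (altTerm s) :=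
  .of_norm (by simpa only [norm_altTerm] using summable_nat_add_one_rpow (neg_lt_neg hs))

lemma LSeries_term_altSign (s : ℂ) (n : ℕ) :
    LSeries.term (fun n : ℕ => altSign n) s (n + 1) = altTerm s n := by
  rw [LSeries.term_of_ne_zero n.succ_ne_zero, altSign_natCast, altTerm, cpow_neg, div_eq_mul_inv]
  push_cast; rfl

lemma altZeta_eq_LFunction_of_one_lt_re {s : ℂ} (hs : 1 < s.re) :
    altZeta s = ZMod.LFunction altSign s := by
  have hsum := summable_altTerm hs
  have heven : Summable fun m : ℕ => altTerm s (2 * m) :=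
    hsum.comp_injective fun _ _ h => by omega
  have hodd : Summable fun m : ℕ => altTerm s (2 * m + 1) :=
    hsum.comp_injective fun _ _ h => by omega
  rw [ZMod.LFunction_eq_LSeries _ hs, LSeries,
    (ZMod.LSeriesSummable_of_one_lt_re altSign hs).tsum_eq_zero_add, LSeries.term_zero, zero_add,
    altZeta, heven.tsum_add hodd, tsum_even_add_odd heven hodd]
  simp only [LSeries_term_altSign]

lemma differentiable_altTerm (n : ℕ) : Differentiable ℂ fun s => altTerm s n := by
  unfold altTerm
  fun_prop (disch := exact Or.inl (by norm_cast))

lemma differentiableOn_altZeta_of_lt {σ R : ℝ} (hσ : 0 < σ) :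
    DifferentiableOn ℂ altZeta ({s | σ < s.re} ∩ Metric.ball 0 R) := by
  refine differentiableOn_tsum_of_summable_norm
    ((summable_nat_add_one_rpow (by linarith : -σ - 1 < -1)).mul_left R)
    (fun m => ((differentiable_altTerm _).add (differentiable_altTerm _)).differentiableOn)
    ((isOpen_lt continuous_const continuous_re).inter Metric.isOpen_ball) ?_
  rintro m w ⟨hσw, hwR⟩
  have hσw : σ < w.re := hσw
  have hwR : ‖w‖ < R := mem_ball_zero_iff.mp hwR
  calc ‖altTerm w (2 * m) + altTerm w (2 * m + 1)‖
      ≤ ‖w‖ * ((m : ℝ) + 1) ^ (-w.re - 1) := norm_altTerm_two_mul_add_altTerm_le (by linarith) m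
    _ ≤ R * ((m : ℝ) + 1) ^ (-σ - 1) := by
        gcongr
        · exact (norm_nonneg w).trans hwR.le
        · exact le_add_of_nonneg_left (Nat.cast_nonneg m)

lemma differentiableOn_altZeta : DifferentiableOn ℂ altZeta {s | 0 < s.re} := by
  intro z (hz : 0 < z.re)
  have hmem : z ∈ {s : ℂ | z.re / 2 < s.re} ∩ Metric.ball 0 (‖z‖ + 1) :=
    ⟨show z.re / 2 < z.re by linarith, mem_ball_zero_iff.mpr (lt_add_one _)⟩
  exact ((differentiableOn_altZeta_of_lt (half_pos hz)).differentiableAt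
    (((isOpen_lt continuous_const continuous_re).inter Metric.isOpen_ball).mem_nhds hmem))
    |>.differentiableWithinAt

lemma altZeta_eq_LFunction {s : ℂ} (hs : 0 < s.re) : altZeta s = ZMod.LFunction altSign s :=
  eqOn_of_forall_one_lt_re (isOpen_lt continuous_const continuous_re)
    (convex_halfSpace_re_gt 0).isPreconnected (fun s (hs : 1 < s.re) => zero_lt_one.trans hs)
    differentiableOn_altZeta
    (ZMod.differentiable_LFunction_of_sum_zero sum_altSign).differentiableOn
    (fun _ => altZeta_eq_LFunction_of_one_lt_re) hs

lemma re_pos_of_tendsto_sum_altTerm {s L : ℂ}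
    (h : Tendsto (fun N => ∑ n ∈ Finset.range N, altTerm s n) atTop (𝓝 L)) : 0 < s.re := by
  have hterm : Tendsto (altTerm s) atTop (𝓝 0) := by
    simpa [Finset.sum_range_succ] using (h.comp (tendsto_add_atTop_nat 1)).sub h
  obtain ⟨n, hn⟩ := (hterm.norm.eventually_lt_const (by norm_num : ‖(0 : ℂ)‖ < 1)).exists
  by_contra! hre
  rw [norm_altTerm] at hn
  exact hn.not_ge (Real.one_le_rpow (le_add_of_nonneg_left n.cast_nonneg) (by linarith))

lemma altZeta_eq_of_tendsto {s L : ℂ} (hs : 0 < s.re)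
    (h : Tendsto (fun N => ∑ n ∈ Finset.range N, altTerm s n) atTop (𝓝 L)) : altZeta s = L := by
  have hpairs : Summable fun m : ℕ => altTerm s (2 * m) + altTerm s (2 * m + 1) :=
    .of_norm_bounded ((summable_nat_add_one_rpow (by linarith : -s.re - 1 < -1)).mul_left ‖s‖)
      (norm_altTerm_two_mul_add_altTerm_le (by linarith))
  refine tendsto_nhds_unique hpairs.hasSum.tendsto_sum_nat ?_
  simpa only [Function.comp_def, id_eq, sum_range_two_mul] using
    h.comp (tendsto_id.const_mul_atTop' two_pos)

lemma tendsto_sum_altTerm_ofReal_sub_mul_I {a b x y : ℝ}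
    (hcos : Tendsto (fun N : ℕ => ∑ n ∈ Finset.range N,
        ((-1 : ℝ) ^ (n + 1) / ((n : ℝ) + 1) ^ a) * Real.cos (b * Real.log ((n : ℝ) + 1)))
      atTop (𝓝 x))
    (hsin : Tendsto (fun N : ℕ => ∑ n ∈ Finset.range N,
        ((-1 : ℝ) ^ (n + 1) / ((n : ℝ) + 1) ^ a) * Real.sin (b * Real.log ((n : ℝ) + 1)))
      atTop (𝓝 y)) :
    Tendsto (fun N => ∑ n ∈ Finset.range N, altTerm (a - b * I) n) atTop (𝓝 (x + y * I)) := by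
  simpa only [altTerm_ofReal_sub_mul_I, Finset.sum_add_distrib, ← Finset.sum_mul, ofReal_sum,
    Function.comp_def] using
    ((continuous_ofReal.tendsto x).comp hcos).add
      (((continuous_ofReal.tendsto y).comp hsin).mul_const I)

lemma re_eq_one_of_two_cpow_one_sub_eq_one {s : ℂ} (h : (2 : ℂ) ^ (1 - s) = 1) : s.re = 1 := by
  have hnorm := congrArg norm h
  rw [← ofReal_ofNat, norm_cpow_eq_rpow_re_of_pos two_pos, norm_one, sub_re, one_re,
    ← Real.rpow_zero 2, Real.rpow_right_inj two_pos (by norm_num)] at hnorm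
  linarith

end AlternatingZeta

open AlternatingZeta

theorem rh_implies_new_conjecture
    (RH : ∀ s : ℂ, riemannZeta s = 0 → (∀ n : ℕ, s ≠ -2 * ((n : ℂ) + 1)) → s.re = 1 / 2)
    (a b : ℝ)
    (hcos : Tendsto (fun N : ℕ => ∑ n ∈ Finset.range N,
        ((-1 : ℝ) ^ (n + 1) / ((n : ℝ) + 1) ^ a) * Real.cos (b * Real.log ((n : ℝ) + 1)))
      atTop (𝓝 0))
    (hsin : Tendsto (fun N : ℕ => ∑ n ∈ Finset.range N,
        ((-1 : ℝ) ^ (n + 1) / ((n : ℝ) + 1) ^ a) * Real.sin (b * Real.log ((n : ℝ) + 1)))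
      atTop (𝓝 0)) :
    a = 1 / 2 ∨ a = 1 := by
  set s : ℂ := a - b * I
  have hre : s.re = a := by simp [s]
  have hS : Tendsto (fun N => ∑ n ∈ Finset.range N, altTerm s n) atTop (𝓝 0) := by
    simpa using tendsto_sum_altTerm_ofReal_sub_mul_I hcos hsin
  have hpos : 0 < s.re := re_pos_of_tendsto_sum_altTerm hS
  have hL : ZMod.LFunction altSign s = 0 := by
    rw [← altZeta_eq_LFunction hpos, altZeta_eq_of_tendsto hpos hS]
  rcases eq_or_ne s 1 with hs1 | hs1
  · exact Or.inr (by simpa [hre] using congrArg re hs1)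
  rw [LFunction_altSign hs1, mul_eq_zero, sub_eq_zero] at hL
  rcases hL with h2 | hζ
  · exact Or.inr (hre ▸ re_eq_one_of_two_cpow_one_sub_eq_one h2)
  · refine Or.inl (hre ▸ RH s hζ fun n hn => ?_)
    have := hn ▸ hpos
    norm_num at this
    linarith
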